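/- Let τ > 0, a, b ∈ ℝ, and let φ : [−τ, 0] → ℝ be continuously differentiable. Then for every t ≥ 0 the following integration-by-parts identity holds: e^{a(t + τ)} exp_τ(b e^{−aτ}, t) φ(−τ) + ∫_{−τ}^{0} e^{a(t − s)} exp_τ(b e^{−aτ}, t − τ − s) (φ′(s) − a φ(s)) ds = e^{at} exp_τ(b e^{−aτ}, t − τ) φ(0) + b ∫_{−τ}^{0} e^{a(t − s − τ)} exp_τ(b e^{−aτ}, t − 2τ − s) φ(s) ds. -/

import Mathlib

/-!
On `[(n - 1)τ, nτ]` the delayed exponential is the polynomial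
`∑_{k ≤ n} b^k (t - (k - 1)τ)^k / k!`, and consecutive pieces agree at the knots `nτ`
(`n ≥ 0`). Hence `exp_τ(b, ·)` is continuous on `[-τ, ∞)` and satisfies
`exp_τ(b, ·)' = b exp_τ(b, · - τ)` off its jump at `-τ` and its kink at `0`.
The identity is the fundamental theorem of calculus for
`s ↦ e^{a(t-s)} exp_τ(b e^{-aτ}, t - τ - s) φ(s)` on `[-τ, 0]`, using
`e^{-aτ} e^{a(t-s)} = e^{a(t-s-τ)}`: this function is differentiable except at `s = t - τ`,
a single point the FTC may ignore, and the term containing `exp_τ(·, t - 2τ - s)`, which jumps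
there, is still integrable.
-/

open Real Set

/-- The delayed exponential function: `exp_τ(b, t) = 0` for `t < -τ`, and
`exp_τ(b, t) = 1 + ∑_{k=1}^{⌊t/τ⌋+1} b^k (t - (k-1)τ)^k / k!` for `t ≥ -τ`. -/
noncomputable def delayedExp (τ b t : ℝ) : ℝ :=
  if t < -τ then 0
  else 1 + ∑ k ∈ Finset.Icc 1 (⌊t / τ⌋ + 1).toNat,
    b ^ k * (t - ((k : ℝ) - 1) * τ) ^ k / (Nat.factorial k)

open Filter Topology MeasureTheory

noncomputable def delayedExpPoly (τ b : ℝ) (n : ℕ) (t : ℝ) : ℝ :=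
  ∑ k ∈ Finset.range n, b ^ k * (t - ((k : ℝ) - 1) * τ) ^ k / (Nat.factorial k)

section
variable {τ b t : ℝ}

lemma delayedExp_of_lt (ht : t < -τ) : delayedExp τ b t = 0 := if_pos ht

lemma delayedExp_eq_delayedExpPoly_floor (ht : -τ ≤ t) :
    delayedExp τ b t = delayedExpPoly τ b ((⌊t / τ⌋ + 1).toNat + 1) t := by
  rw [delayedExp, if_neg ht.not_gt, delayedExpPoly, Finset.range_eq_Ico,
    Finset.sum_eq_sum_Ico_succ_bot (Nat.succ_pos _)]
  simp [Finset.Ico_add_one_right_eq_Icc]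

lemma delayedExpPoly_succ_natCast_mul (n : ℕ) :
    delayedExpPoly τ b (n + 2) (n * τ) = delayedExpPoly τ b (n + 1) (n * τ) := by
  rw [delayedExpPoly, Finset.sum_range_succ]
  simp [delayedExpPoly]

lemma delayedExp_eq_delayedExpPoly (hτ : 0 < τ) {n : ℕ}
    (ht : t ∈ Icc (((n : ℝ) - 1) * τ) (n * τ)) :
    delayedExp τ b t = delayedExpPoly τ b (n + 1) t := by
  have hge : -τ ≤ t := by nlinarith [ht.1, (n.cast_nonneg : (0 : ℝ) ≤ n)]
  rw [delayedExp_eq_delayedExpPoly_floor hge]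
  rcases ht.2.lt_or_eq with hlt | rfl
  · have hfl : ⌊t / τ⌋ = (n : ℤ) - 1 := by
      rw [Int.floor_eq_iff, le_div_iff₀ hτ, div_lt_iff₀ hτ]
      push_cast
      constructor <;> linarith [ht.1]
    rw [hfl]
    congr 1
    omega
  · rw [mul_div_cancel_right₀ _ hτ.ne', Int.floor_natCast]
    exact delayedExpPoly_succ_natCast_mul n

lemma hasDerivAt_delayedExpPoly_succ (τ b : ℝ) (n : ℕ) (x : ℝ) :
    HasDerivAt (delayedExpPoly τ b (n + 1)) (b * delayedExpPoly τ b n (x - τ)) x := by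
  have hterm : ∀ k ∈ Finset.range n, HasDerivAt
      (fun t ↦
        b ^ (k + 1) * (t - (((k + 1 : ℕ) : ℝ) - 1) * τ) ^ (k + 1) / (Nat.factorial (k + 1)))
      (b * (b ^ k * (x - τ - ((k : ℝ) - 1) * τ) ^ k / (Nat.factorial k))) x := by
    intro k _
    refine ((((hasDerivAt_id x).sub_const _).pow (k + 1)).const_mul _).div_const _
      |>.congr_deriv ?_
    simp only [id, Nat.factorial_succ]
    push_cast
    field_simp
    ring
  have hpoly : delayedExpPoly τ b (n + 1) = fun t ↦ 1 + ∑ k ∈ Finset.range n,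
      b ^ (k + 1) * (t - (((k + 1 : ℕ) : ℝ) - 1) * τ) ^ (k + 1) / (Nat.factorial (k + 1)) := by
    funext t
    simp [delayedExpPoly, Finset.sum_range_succ', add_comm]
  rw [hpoly, delayedExpPoly, Finset.mul_sum]
  exact (HasDerivAt.fun_sum hterm).const_add 1

lemma delayedExp_sub_eq_delayedExpPoly (hτ : 0 < τ) {n : ℕ} {x : ℝ}
    (hx : x ∈ Icc (((n : ℝ) - 1) * τ) (n * τ)) (hx0 : x ≠ 0) :
    delayedExp τ b (x - τ) = delayedExpPoly τ b n (x - τ) := by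
  cases n with
  | zero =>
    have hneg : x < 0 := lt_of_le_of_ne (by simpa using hx.2) hx0
    rw [delayedExp_of_lt (by linarith), delayedExpPoly, Finset.sum_range_zero]
  | succ n =>
    obtain ⟨hlo, hhi⟩ := hx
    push_cast at hlo hhi
    exact delayedExp_eq_delayedExpPoly hτ ⟨by linarith, by linarith⟩

lemma exists_Icc_mem_nhdsGE (hτ : 0 < τ) {x : ℝ} (hx : -τ ≤ x) :
    ∃ n : ℕ, Icc (((n : ℝ) - 1) * τ) (n * τ) ∈ 𝓝[≥] x := by
  have hx' : 0 ≤ x / τ + 1 := by rw [div_add_one hτ.ne']; exact div_nonneg (by linarith) hτ.le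
  refine ⟨⌊x / τ + 1⌋₊, Icc_mem_nhdsGE_of_mem ⟨?_, ?_⟩⟩
  · rw [← le_div_iff₀ hτ, sub_le_iff_le_add]
    exact Nat.floor_le hx'
  · rw [← div_lt_iff₀ hτ, ← add_lt_add_iff_right 1]
    exact Nat.lt_floor_add_one _

lemma exists_Icc_mem_nhdsLE (hτ : 0 < τ) {x : ℝ} (hx : -τ < x) :
    ∃ n : ℕ, Icc (((n : ℝ) - 1) * τ) (n * τ) ∈ 𝓝[≤] x := by
  refine ⟨⌈x / τ⌉₊, Icc_mem_nhdsLE_of_mem ⟨?_, ?_⟩⟩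
  · rw [← lt_div_iff₀ hτ, sub_lt_iff_lt_add]
    exact Nat.ceil_lt_add_one_of_gt_neg_one (by rwa [lt_div_iff₀ hτ, neg_one_mul])
  · rw [← div_le_iff₀ hτ]
    exact Nat.le_ceil _

lemma delayedExp_eventuallyEq_delayedExpPoly (hτ : 0 < τ) {n : ℕ} {x : ℝ} {s : Set ℝ}
    (hs : Icc (((n : ℝ) - 1) * τ) (n * τ) ∈ 𝓝[s] x) :
    delayedExp τ b =ᶠ[𝓝[s] x] delayedExpPoly τ b (n + 1) :=
  eventually_of_mem hs fun _ ↦ delayedExp_eq_delayedExpPoly hτ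

lemma hasDerivWithinAt_delayedExp_of_Icc_mem (hτ : 0 < τ) {n : ℕ} {x : ℝ} {s : Set ℝ}
    (hs : Icc (((n : ℝ) - 1) * τ) (n * τ) ∈ 𝓝[s] x) (hxs : x ∈ s) (hx0 : x ≠ 0) :
    HasDerivWithinAt (delayedExp τ b) (b * delayedExp τ b (x - τ)) s x := by
  have hx := mem_of_mem_nhdsWithin hxs hs
  rw [delayedExp_sub_eq_delayedExpPoly hτ hx hx0]
  exact (hasDerivAt_delayedExpPoly_succ τ b n x).hasDerivWithinAt.congr_of_eventuallyEq
    (delayedExp_eventuallyEq_delayedExpPoly hτ hs) (delayedExp_eq_delayedExpPoly hτ hx)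

lemma continuousWithinAt_delayedExp_of_Icc_mem (hτ : 0 < τ) {n : ℕ} {x : ℝ} {s : Set ℝ}
    (hs : Icc (((n : ℝ) - 1) * τ) (n * τ) ∈ 𝓝[s] x) (hxs : x ∈ s) :
    ContinuousWithinAt (delayedExp τ b) s x :=
  (hasDerivAt_delayedExpPoly_succ τ b n x).continuousAt.continuousWithinAt.congr_of_eventuallyEq
    (delayedExp_eventuallyEq_delayedExpPoly hτ hs)
    (delayedExp_eq_delayedExpPoly hτ (mem_of_mem_nhdsWithin hxs hs))

theorem hasDerivAt_delayedExp (hτ : 0 < τ) {x : ℝ} (hx : -τ < x) (hx0 : x ≠ 0) :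
    HasDerivAt (delayedExp τ b) (b * delayedExp τ b (x - τ)) x := by
  obtain ⟨m, hm⟩ := exists_Icc_mem_nhdsLE hτ hx
  obtain ⟨n, hn⟩ := exists_Icc_mem_nhdsGE hτ hx.le
  have := (hasDerivWithinAt_delayedExp_of_Icc_mem (b := b) hτ hm self_mem_Iic hx0).union
    (hasDerivWithinAt_delayedExp_of_Icc_mem hτ hn self_mem_Ici hx0)
  rwa [Iic_union_Ici, hasDerivWithinAt_univ] at this

theorem continuousOn_delayedExp (hτ : 0 < τ) : ContinuousOn (delayedExp τ b) (Ici (-τ)) := by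
  intro x hx
  obtain ⟨n, hn⟩ := exists_Icc_mem_nhdsGE hτ hx
  have hright := continuousWithinAt_delayedExp_of_Icc_mem (b := b) hτ hn self_mem_Ici
  rcases (mem_Ici.1 hx).eq_or_lt with rfl | hx
  · exact hright
  · obtain ⟨m, hm⟩ := exists_Icc_mem_nhdsLE hτ hx
    have := (continuousWithinAt_delayedExp_of_Icc_mem hτ hm self_mem_Iic).union hright
    rw [Iic_union_Ici, continuousWithinAt_univ] at this
    exact this.continuousWithinAt

theorem locallyIntegrable_delayedExp (hτ : 0 < τ) : LocallyIntegrable (delayedExp τ b) := by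
  refine locallyIntegrable_iff.2 fun K hK ↦ ?_
  have hzero : IntegrableOn (delayedExp τ b) (K ∩ Iio (-τ)) :=
    integrableOn_zero.congr_fun (fun x hx ↦ (delayedExp_of_lt hx.2).symm)
      (hK.measurableSet.inter measurableSet_Iio)
  have hcont : IntegrableOn (delayedExp τ b) (K ∩ Ici (-τ)) :=
    ((continuousOn_delayedExp hτ).mono inter_subset_right).integrableOn_compact
      (hK.inter_right isClosed_Ici)
  simpa [← inter_union_distrib_left] using hzero.union hcont

lemma intervalIntegrable_delayedExp_comp_sub_left (hτ : 0 < τ) (c u v : ℝ) :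
    IntervalIntegrable (fun s ↦ delayedExp τ b (c - s)) volume u v := by
  simpa using ((locallyIntegrable_delayedExp hτ).integrableOn_isCompact
    isCompact_uIcc).intervalIntegrable.comp_sub_left c (a := c - u) (b := c - v)

end

lemma hasDerivAt_exp_mul_delayedExp_mul {τ a b t s φ's : ℝ} {φ : ℝ → ℝ} (hτ : 0 < τ)
    (hφ : HasDerivAt φ φ's s) (hs : -τ < t - τ - s) (hs0 : t - τ - s ≠ 0) :
    HasDerivAt (fun s ↦ exp (a * (t - s)) * delayedExp τ (b * exp (-a * τ)) (t - τ - s) * φ s)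
      (exp (a * (t - s)) * delayedExp τ (b * exp (-a * τ)) (t - τ - s) * (φ's - a * φ s)
        - b * (exp (a * (t - s - τ)) * delayedExp τ (b * exp (-a * τ)) (t - 2 * τ - s) * φ s))
      s := by
  have hE := (hasDerivAt_delayedExp (b := b * exp (-a * τ)) hτ hs hs0).comp s
    ((hasDerivAt_id s).const_sub (t - τ))
  have hexp := (((hasDerivAt_id s).const_sub t).const_mul a).exp
  refine ((hexp.mul hE).mul hφ).congr_deriv ?_
  rw [show t - τ - s - τ = t - 2 * τ - s by ring,
    show a * (t - s - τ) = a * (t - s) + -a * τ by ring, exp_add]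
  simp only [id, Function.comp_apply, Pi.mul_apply]
  ring

/-- The integration-by-parts identity for the history term in the explicit
representation formula of solutions to the delay ODE. -/
theorem delayedExp_integration_by_parts (τ a b : ℝ) (hτ : 0 < τ)
    (φ φ' : ℝ → ℝ)
    (hφ : ∀ s ∈ Icc (-τ) (0 : ℝ), HasDerivAt φ (φ' s) s)
    (hφ' : ContinuousOn φ' (Icc (-τ) 0)) :
    ∀ t : ℝ, 0 ≤ t →
      Real.exp (a * (t + τ)) * delayedExp τ (b * Real.exp (-a * τ)) t * φ (-τ)
      + (∫ s in (-τ)..(0 : ℝ),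
          Real.exp (a * (t - s)) * delayedExp τ (b * Real.exp (-a * τ)) (t - τ - s)
            * (φ' s - a * φ s))
      = Real.exp (a * t) * delayedExp τ (b * Real.exp (-a * τ)) (t - τ) * φ 0
      + b * ∫ s in (-τ)..(0 : ℝ),
          Real.exp (a * (t - s - τ)) * delayedExp τ (b * Real.exp (-a * τ)) (t - 2 * τ - s)
            * φ s := by
  intro t ht
  set β := b * exp (-a * τ)
  have hτ0 : -τ ≤ 0 := by linarith
  have hφc : ContinuousOn φ (Icc (-τ) 0) :=
    fun s hs ↦ (hφ s hs).continuousAt.continuousWithinAt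
  have hexpE :
      ContinuousOn (fun s ↦ exp (a * (t - s)) * delayedExp τ β (t - τ - s)) (Icc (-τ) 0) :=
    (continuous_exp.comp (by fun_prop)).continuousOn.mul <|
      (continuousOn_delayedExp hτ).comp (by fun_prop) fun s hs ↦ by
        simp only [mem_Ici]; linarith [hs.2]
  have hA : IntervalIntegrable (fun s ↦ exp (a * (t - s)) * delayedExp τ β (t - τ - s)
      * (φ' s - a * φ s)) volume (-τ) 0 := by
    refine ContinuousOn.intervalIntegrable ?_
    rw [uIcc_of_le hτ0]
    exact hexpE.mul (hφ'.sub (continuousOn_const.mul hφc))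
  have hB : IntervalIntegrable (fun s ↦ exp (a * (t - s - τ)) * delayedExp τ β (t - 2 * τ - s)
      * φ s) volume (-τ) 0 :=
    ((intervalIntegrable_delayedExp_comp_sub_left hτ _ _ _).continuousOn_mul
      (by fun_prop)).mul_continuousOn (by rwa [uIcc_of_le hτ0])
  have hFTC := integral_eq_of_hasDerivAt_off_countable_of_le _ _ hτ0 (countable_singleton (t - τ))
    (hexpE.mul hφc) (fun s hs ↦ hasDerivAt_exp_mul_delayedExp_mul hτ
      (hφ s (Ioo_subset_Icc_self hs.1)) (by linarith [hs.1.2]) (sub_ne_zero.2 (Ne.symm hs.2)))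
    (hA.sub (hB.const_mul b))
  rw [intervalIntegral.integral_sub hA (hB.const_mul b), intervalIntegral.integral_const_mul]
    at hFTC
  simp only [Pi.mul_apply, sub_zero, sub_neg_eq_add, sub_add_cancel] at hFTC
  linarith
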